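/- There exists a fair division instance with two agents whose valuations are matroid-rank functions and an allocation that is envy-free (hence EF1) but satisfies neither the MMS nor the PMMS guarantee. -/

import Mathlib

structure FinMatroid (E : Type*) [Fintype E] [DecidableEq E] where
  Indep : Finset E → Prop
  empty_indep : Indep ∅
  subset_indep : ∀ ⦃I J : Finset E⦄, Indep I → J ⊆ I → Indep J
  aug : ∀ ⦃I J : Finset E⦄, Indep I → Indep J → I.card < J.card →
    ∃ g ∈ J \ I, Indep (insert g I)

noncomputable def FinMatroid.rank {E : Type*} [Fintype E] [DecidableEq E]
    (M : FinMatroid E) (S : Finset E) : ℕ :=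
  sSup {t | ∃ I : Finset E, I ⊆ S ∧ M.Indep I ∧ I.card = t}

/-- Maximin share `μ(k, S)` for a ℕ-valued valuation `v`: the maximum over
`k`-partitions `(Y 0, …, Y (k-1))` of `S` of `min_j v (Y j)`. -/
noncomputable def mmsN {E : Type*} [Fintype E] [DecidableEq E]
    (v : Finset E → ℕ) (k : ℕ) (S : Finset E) : ℕ :=
  sSup {t | ∃ Y : Fin k → Finset E,
    (∀ a b, a ≠ b → Disjoint (Y a) (Y b)) ∧ Finset.univ.biUnion Y = S ∧
    ∀ j, t ≤ v (Y j)}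

/-!
Agent 1's matroid is the partition matroid with blocks `{0,1}`, `{2,3}`, `{4,5}` of capacities
`1, 1, 2`. In two disjoint sets each block contributes at most `2` to the total rank, so
every split of the goods has total rank at most `6` and the maximin share is at most `3`;
it is attained by `{0,2,4}, {1,3,5}`. Yet `{0,1,2,3}` has rank only `2` for agent 1, the
rank of `{4,5}`, and agent 2 prefers the larger bundle, so the allocation is envy-free.
-/

namespace FinMatroid

variable {E : Type*} [Fintype E] [DecidableEq E]

theorem rank_le_of_forall_indep {M : FinMatroid E} {S : Finset E} {n : ℕ}
    (h : ∀ I ⊆ S, M.Indep I → I.card ≤ n) : M.rank S ≤ n :=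
  csSup_le' fun _ ⟨I, hIS, hI, hIt⟩ => hIt ▸ h I hIS hI

theorem card_le_rank_of_indep {M : FinMatroid E} {I S : Finset E} (hIS : I ⊆ S)
    (hI : M.Indep I) : I.card ≤ M.rank S :=
  le_csSup ⟨S.card, fun _ ⟨_, hJS, _, hJt⟩ => hJt ▸ Finset.card_le_card hJS⟩ ⟨I, hIS, hI, rfl⟩

theorem rank_le_card (M : FinMatroid E) (S : Finset E) : M.rank S ≤ S.card :=
  rank_le_of_forall_indep fun _ hIS _ => Finset.card_le_card hIS

theorem rank_eq_card_of_indep {M : FinMatroid E} {S : Finset E} (hS : M.Indep S) :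
    M.rank S = S.card :=
  (M.rank_le_card S).antisymm (card_le_rank_of_indep subset_rfl hS)

def free (E : Type*) [Fintype E] [DecidableEq E] : FinMatroid E where
  Indep _ := True
  empty_indep := trivial
  subset_indep _ _ _ _ := trivial
  aug _ _ _ _ hIJ :=
    let ⟨g, hgJ, hgI⟩ := Finset.exists_mem_notMem_of_card_lt_card hIJ
    ⟨g, Finset.mem_sdiff.2 ⟨hgJ, hgI⟩, trivial⟩

theorem free_rank (S : Finset E) : (free E).rank S = S.card :=
  rank_eq_card_of_indep trivial

section Partition

variable {ι : Type*} [Fintype ι] [DecidableEq ι]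

def partition (b : E → ι) (c : ι → ℕ) : FinMatroid E where
  Indep X := ∀ i, (X.filter (b · = i)).card ≤ c i
  empty_indep i := by simp
  subset_indep I J hI hJI i :=
    (Finset.card_le_card (Finset.filter_subset_filter _ hJI)).trans (hI i)
  aug I J hI hJ hIJ := by
    rw [Finset.card_eq_sum_card_fiberwise (f := b) (t := Finset.univ) (by simp),
      Finset.card_eq_sum_card_fiberwise (s := J) (f := b) (t := Finset.univ) (by simp)] at hIJ
    obtain ⟨i, -, hi⟩ := Finset.exists_lt_of_sum_lt hIJ
    obtain ⟨g, hgJ, hgI⟩ := Finset.exists_mem_notMem_of_card_lt_card hi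
    rw [Finset.mem_filter] at hgJ hgI
    have hgI' : g ∉ I := fun h => hgI ⟨h, hgJ.2⟩
    refine ⟨g, Finset.mem_sdiff.2 ⟨hgJ.1, hgI'⟩, fun j => ?_⟩
    rw [Finset.filter_insert]
    split_ifs with hgj
    · obtain rfl := hgJ.2.symm.trans hgj
      rw [Finset.card_insert_of_notMem (by simp [hgI'])]
      exact hi.trans_le (hJ _)
    · exact hI j

variable {b : E → ι} {c : ι → ℕ}

theorem partition_indep_iff {X : Finset E} :
    (partition b c).Indep X ↔ ∀ i, (X.filter (b · = i)).card ≤ c i :=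
  Iff.rfl

theorem partition_rank_le (S : Finset E) :
    (partition b c).rank S ≤ ∑ i, min (c i) (S.filter (b · = i)).card :=
  rank_le_of_forall_indep fun I hIS hI => by
    rw [Finset.card_eq_sum_card_fiberwise (f := b) (t := Finset.univ) (by simp)]
    exact Finset.sum_le_sum fun i _ =>
      le_min (hI i) (Finset.card_le_card (Finset.filter_subset_filter _ hIS))

/-- In `k` disjoint sets, each block `i` contributes at most `k * c i` to the total rank,
and at most its size. -/
theorem sum_partition_rank_le {k : ℕ} {Y : Fin k → Finset E}
    (hY : ∀ a a', a ≠ a' → Disjoint (Y a) (Y a')) :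
    ∑ j, (partition b c).rank (Y j) ≤
      ∑ i, min (k * c i) (Finset.univ.filter (b · = i)).card := by
  calc ∑ j, (partition b c).rank (Y j)
      ≤ ∑ j, ∑ i, min (c i) ((Y j).filter (b · = i)).card :=
        Finset.sum_le_sum fun j _ => partition_rank_le (Y j)
    _ = ∑ i, ∑ j, min (c i) ((Y j).filter (b · = i)).card := Finset.sum_comm
    _ ≤ ∑ i, min (k * c i) (Finset.univ.filter (b · = i)).card := by
        refine Finset.sum_le_sum fun i _ => le_min ?_ ?_
        · simpa using Finset.sum_le_sum fun j (_ : j ∈ Finset.univ) =>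
            min_le_left (c i) ((Y j).filter (b · = i)).card
        · have hdisj : (↑(Finset.univ : Finset (Fin k)) : Set (Fin k)).PairwiseDisjoint
              fun j => (Y j).filter (b · = i) :=
            fun a _ a' _ haa' => Finset.disjoint_filter_filter (hY a a' haa')
          calc ∑ j, min (c i) ((Y j).filter (b · = i)).card
              ≤ ∑ j, ((Y j).filter (b · = i)).card :=
                Finset.sum_le_sum fun j _ => min_le_right _ _
            _ = (Finset.univ.biUnion fun j => (Y j).filter (b · = i)).card :=
                (Finset.card_biUnion hdisj).symm
            _ ≤ (Finset.univ.filter (b · = i)).card :=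
                Finset.card_le_card fun x hx => by
                  obtain ⟨j, -, hx⟩ := Finset.mem_biUnion.1 hx
                  exact Finset.mem_filter.2 ⟨Finset.mem_univ x, (Finset.mem_filter.1 hx).2⟩

end Partition

end FinMatroid

section MaximinShare

variable {E : Type*} [Fintype E] [DecidableEq E]

theorem le_mmsN {v : Finset E → ℕ} {k : ℕ} {S : Finset E} {t : ℕ} (B : ℕ)
    (hv : ∀ X, v X ≤ B) (Y : Fin k → Finset E) (hY : ∀ a a', a ≠ a' → Disjoint (Y a) (Y a'))
    (hYS : Finset.univ.biUnion Y = S) (ht : ∀ j, t ≤ v (Y j)) (hk : 0 < k) :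
    t ≤ mmsN v k S :=
  le_csSup ⟨B, fun _ ⟨_, _, _, ht'⟩ => (ht' ⟨0, hk⟩).trans (hv _)⟩ ⟨Y, hY, hYS, ht⟩

theorem mmsN_le {v : Finset E → ℕ} {k : ℕ} {S : Finset E} {m : ℕ}
    (h : ∀ Y : Fin k → Finset E, (∀ a a', a ≠ a' → Disjoint (Y a) (Y a')) →
      Finset.univ.biUnion Y = S → ∑ j, v (Y j) < k * (m + 1)) :
    mmsN v k S ≤ m :=
  csSup_le' fun t ⟨Y, hY, hYS, ht⟩ => by
    have hkt : k * t ≤ ∑ j, v (Y j) := by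
      simpa using Finset.card_nsmul_le_sum Finset.univ (fun j => v (Y j)) t fun j _ => ht j
    have := hkt.trans_lt (h Y hY hYS)
    exact Nat.lt_succ_iff.1 (Nat.lt_of_mul_lt_mul_left this)

end MaximinShare

def agentOneMatroid : FinMatroid (Fin 6) :=
  FinMatroid.partition (![0, 0, 1, 1, 2, 2] : Fin 6 → Fin 3) ![1, 1, 2]

theorem agentOneMatroid_indep_iff (X : Finset (Fin 6)) :
    agentOneMatroid.Indep X ↔ (X ∩ {0, 1}).card ≤ 1 ∧ (X ∩ {2, 3}).card ≤ 1 := by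
  rw [agentOneMatroid, FinMatroid.partition_indep_iff]
  revert X
  decide

theorem agentOneMatroid_rank_eq_card {S : Finset (Fin 6)}
    (hS : (S ∩ {0, 1}).card ≤ 1 ∧ (S ∩ {2, 3}).card ≤ 1) :
    agentOneMatroid.rank S = S.card :=
  FinMatroid.rank_eq_card_of_indep ((agentOneMatroid_indep_iff S).2 hS)

theorem agentOneMatroid_rank_le_two : agentOneMatroid.rank {0, 1, 2, 3} ≤ 2 :=
  (FinMatroid.partition_rank_le _).trans (by decide)

theorem agentOneMatroid_mmsN : mmsN agentOneMatroid.rank 2 Finset.univ = 3 := by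
  refine le_antisymm (mmsN_le fun Y hY _ => ?_) ?_
  · exact (FinMatroid.sum_partition_rank_le hY).trans_lt (by decide)
  · refine le_mmsN 6 (fun X => (agentOneMatroid.rank_le_card X).trans X.card_le_univ)
      ![{0, 2, 4}, {1, 3, 5}] (by decide) (by decide) (Fin.forall_fin_two.2 ⟨?_, ?_⟩) two_pos
    · exact (agentOneMatroid_rank_eq_card (S := {0, 2, 4}) (by decide)).ge
    · exact (agentOneMatroid_rank_eq_card (S := {1, 3, 5}) (by decide)).ge

/-- There is a two-agent instance with matroid-rank valuations and an envy-free (hence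
EF1) allocation that is neither MMS nor PMMS: agent 1 has the partition matroid with
parts `{0,1}` and `{2,3}` (capacity 1 each, goods 4 and 5 free), agent 2 the free
matroid, and the allocation is `A₁ = {4,5}`, `A₂ = {0,1,2,3}`. -/
theorem stmt18 : ∃ M1 M2 : FinMatroid (Fin 6),
    (∀ X : Finset (Fin 6),
      M1.Indep X ↔ (X ∩ {0, 1}).card ≤ 1 ∧ (X ∩ {2, 3}).card ≤ 1) ∧
    (∀ X : Finset (Fin 6), M2.Indep X) ∧
    M1.rank ({0, 1, 2, 3} : Finset (Fin 6)) ≤ M1.rank ({4, 5} : Finset (Fin 6)) ∧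
    M2.rank ({4, 5} : Finset (Fin 6)) ≤ M2.rank ({0, 1, 2, 3} : Finset (Fin 6)) ∧
    M1.rank ({4, 5} : Finset (Fin 6)) = 2 ∧
    mmsN M1.rank 2 Finset.univ = 3 ∧
    M1.rank ({4, 5} : Finset (Fin 6)) < mmsN M1.rank 2 Finset.univ := by
  have hA₁ : agentOneMatroid.rank {4, 5} = 2 := agentOneMatroid_rank_eq_card (by decide)
  refine ⟨agentOneMatroid, FinMatroid.free (Fin 6), agentOneMatroid_indep_iff,
    fun _ => trivial, hA₁ ▸ agentOneMatroid_rank_le_two, ?_, hA₁, agentOneMatroid_mmsN,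
    by rw [hA₁, agentOneMatroid_mmsN]; norm_num⟩
  simp only [FinMatroid.free_rank]
  decide
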